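/- Assume 𝕀 ≠ ∅. Then max{deg(u) : u ∈ S′∖S} ≤ max_{i∈𝕀} (δ₁(w_i) + δ₂(w_i) − deg(w_i)) − 2, and also max{deg(u) : u ∈ S′∖S} ≤ ⌊(1 − a₁/d)·max_{i∈𝕀} δ₁(w_i) + (a_{k−1}/d)·max_{i∈𝕀} δ₂(w_i)⌋ − 2 (floor of a rational number). -/

import Mathlib

/-!
Membership in `S` and `S'` is decided coordinatewise: `u ∈ S'` iff `u₁ ∈ S₍₁₎`, `u₂ ∈ S₍₂₎` and
`d ∣ u₁ + u₂`, and such a `u` lies in `S` iff `δ₁(u₁) ≤ deg u` (equivalently `δ₂(u₂) ≤ deg u`):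
a representation of `u₁` with at most `deg u` summands is padded with copies of `a₀ = 0` to
exactly `deg u` summands, and then the second coordinate is forced.

For `u ∈ S' ∖ S` put `i = u₁ mod d`. Then `u = w_i + (q d, r d)` with `deg u = deg w_i + q + r`.
Adding `d = a_k` to the first coordinate, or `d = d - a₀` to the second, costs one summand, so
`δ₁(ω₁(i)) > deg w_i + r` and `δ₂(ω₂(d - i)) > deg w_i + q`. Moreover `i ∈ 𝕀`: for `i = a_j` with
`j < k` we would get `ω₁(i) = a_j`, hence `δ₁ ≤ 1 ≤ deg w_i`. Adding the two inequalities gives the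
first bound; the second follows from
`a₁ δ₁(ω₁(i)) + (d - a_{k-1}) δ₂(ω₂(d - i)) ≤ ω₁(i) + ω₂(d - i) = d deg w_i`.
The integer supremum needs `S' ∖ S ≠ ∅`; it contains `w_i` for every `i ∈ 𝕀`, which is where
`gcd = 1` enters, making `ω₁` and `ω₂` well defined.
-/

namespace ProjMonomialCurve

/-- The numerical semigroup generated by `a 1, …, a k` (equivalently by `A₁ = {0,a 1,…,a k}`). -/
def S1 (k : ℕ) (a : ℕ → ℕ) : Set ℕ :=
  {n | ∃ x : ℕ → ℕ, n = ∑ i ∈ Finset.Icc 1 k, x i * a i}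

/-- The numerical semigroup generated by the nonzero elements `d - a i` (`0 ≤ i ≤ k-1`)
of `A₂`, where `d = a k`. -/
def S2 (k : ℕ) (a : ℕ → ℕ) : Set ℕ :=
  {n | ∃ x : ℕ → ℕ, n = ∑ i ∈ Finset.range k, x i * (a k - a i)}

/-- `δ₁ n`: least total number of summands over representations `n = ∑ xᵢ aᵢ`. -/
noncomputable def delta1 (k : ℕ) (a : ℕ → ℕ) (n : ℕ) : ℕ :=
  sInf {m | ∃ x : ℕ → ℕ, n = ∑ i ∈ Finset.Icc 1 k, x i * a i ∧ m = ∑ i ∈ Finset.Icc 1 k, x i}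

/-- `δ₂ n`: least total number of summands over representations of `n` by the
nonzero elements of `A₂`. -/
noncomputable def delta2 (k : ℕ) (a : ℕ → ℕ) (n : ℕ) : ℕ :=
  sInf {m | ∃ x : ℕ → ℕ,
    n = ∑ i ∈ Finset.range k, x i * (a k - a i) ∧ m = ∑ i ∈ Finset.range k, x i}

/-- `ω₁ i`: the least element of `S₍₁₎` congruent to `i` modulo `d = a k`. -/
noncomputable def omega1 (k : ℕ) (a : ℕ → ℕ) (i : ℕ) : ℕ :=
  sInf {n | n ∈ S1 k a ∧ n % a k = i % a k}

/-- `ω₂ i`: the least element of `S₍₂₎` congruent to `i` modulo `d = a k`. -/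
noncomputable def omega2 (k : ℕ) (a : ℕ → ℕ) (i : ℕ) : ℕ :=
  sInf {n | n ∈ S2 k a ∧ n % a k = i % a k}

/-- `w i = (ω₁(i), ω₂(d-i))`. -/
noncomputable def w (k : ℕ) (a : ℕ → ℕ) (i : ℕ) : ℕ × ℕ :=
  (omega1 k a i, omega2 k a (a k - i))

/-- `e h = (h, d - h)`. -/
def e (k : ℕ) (a : ℕ → ℕ) (h : ℕ) : ℕ × ℕ := (h, a k - h)

/-- The affine semigroup `S ⊆ ℕ²` generated by `e (a 0), …, e (a k)`. -/
def S (k : ℕ) (a : ℕ → ℕ) : Set (ℕ × ℕ) :=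
  {u | ∃ x : ℕ → ℕ, u = ∑ i ∈ Finset.range (k+1), x i • e k a (a i)}

/-- `S' = {u ∈ ℕ² | u + p•e₀ ∈ S and u + p•e_d ∈ S for some p ∈ ℕ}`. -/
def S' (k : ℕ) (a : ℕ → ℕ) : Set (ℕ × ℕ) :=
  {u | ∃ p : ℕ, u + p • e k a 0 ∈ S k a ∧ u + p • e k a (a k) ∈ S k a}

/-- `deg u = (u₁ + u₂)/d` for `u ∈ ℕ²`. -/
def deg (k : ℕ) (a : ℕ → ℕ) (u : ℕ × ℕ) : ℕ := (u.1 + u.2) / a k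

/-- The index set `𝕀`. -/
noncomputable def II (k : ℕ) (a : ℕ → ℕ) : Set ℕ :=
  {i | 1 ≤ i ∧ i ≤ a k - 1 ∧ (∀ j, 1 ≤ j → j ≤ k - 1 → i ≠ a j) ∧
    deg k a (w k a i) < delta1 k a (w k a i).1}

/-- `T = {u ∈ ℤ² | d ∣ u₁+u₂, u₁ ∉ S₍₁₎, u₂ ∉ S₍₂₎}`. -/
def T (k : ℕ) (a : ℕ → ℕ) : Set (ℤ × ℤ) :=
  {u | (a k : ℤ) ∣ u.1 + u.2 ∧ (∀ n ∈ S1 k a, (n : ℤ) ≠ u.1) ∧ (∀ n ∈ S2 k a, (n : ℤ) ≠ u.2)}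

/-- `deg` for integer points. -/
def degZ (k : ℕ) (a : ℕ → ℕ) (u : ℤ × ℤ) : ℤ := (u.1 + u.2) / (a k : ℤ)

/-- The Castelnuovo–Mumford regularity, expressed combinatorially:
`max({deg u + 1 : u ∈ S'∖S} ∪ {deg u + 2 : u ∈ T})`. -/
noncomputable def reg (k : ℕ) (a : ℕ → ℕ) : ℤ :=
  sSup ({z : ℤ | ∃ u ∈ S' k a \ S k a, z = (deg k a u : ℤ) + 1} ∪
        {z : ℤ | ∃ u ∈ T k a, z = degZ k a u + 2})

/-- Frobenius number of `S₍₁₎` (greatest integer not in it; `-1` if the semigroup is all of `ℕ`). -/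
noncomputable def F1 (k : ℕ) (a : ℕ → ℕ) : ℤ :=
  sSup {z : ℤ | ∀ n ∈ S1 k a, (n : ℤ) ≠ z}

/-- Frobenius number of `S₍₂₎`. -/
noncomputable def F2 (k : ℕ) (a : ℕ → ℕ) : ℤ :=
  sSup {z : ℤ | ∀ n ∈ S2 k a, (n : ℤ) ≠ z}

/-- The largest gap `λ_max = max_{1 ≤ i ≤ k} (a i - a (i-1) - 1)`. -/
def lamMax (k : ℕ) (a : ℕ → ℕ) : ℕ :=
  (Finset.Icc 1 k).sup (fun i => a i - a (i-1) - 1)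

/-- The second largest gap: the minimum over `i` of the largest gap among indices `≠ i`. -/
noncomputable def lamSl (k : ℕ) (a : ℕ → ℕ) : ℕ :=
  sInf {m | ∃ i, 1 ≤ i ∧ i ≤ k ∧
    m = ((Finset.Icc 1 k).erase i).sup (fun j => a j - a (j-1) - 1)}

/-- The set `A₁ = {a 0, a 1, …, a k}`. -/
def A1set (k : ℕ) (a : ℕ → ℕ) : Set ℕ := {m | ∃ j ≤ k, a j = m}


open Finset

theorem natCast_finset_gcd {ι : Type*} (s : Finset ι) (b : ι → ℕ) :
    ((s.gcd b : ℕ) : ℤ) = s.gcd (fun j => (b j : ℤ)) := by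
  classical
  induction s using Finset.induction_on with
  | empty => simp
  | insert j s hj ih =>
    rw [gcd_insert, gcd_insert, ← ih, ← Int.coe_gcd, Int.gcd_natCast_natCast]
    rfl

theorem exists_sum_mul_mod_eq {ι : Type*} {s : Finset ι} {b : ι → ℕ} (hs : s.gcd b = 1)
    {d : ℕ} (hd : 0 < d) (i : ℕ) : ∃ x : ι → ℕ, (∑ j ∈ s, x j * b j) % d = i % d := by
  obtain ⟨c, hc⟩ := Finset.gcd_eq_sum_mul s (fun j => (b j : ℤ))
  rw [← natCast_finset_gcd, hs, Nat.cast_one] at hc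
  refine ⟨fun j => (i * c j % d).toNat, ?_⟩
  rw [← Nat.ModEq, ← Int.natCast_modEq_iff]
  have hmod : ∀ j ∈ s, (((i * c j % d).toNat * b j : ℕ) : ℤ) ≡ i * c j * b j [ZMOD d] := by
    intro j _
    push_cast
    rw [Int.toNat_of_nonneg (Int.emod_nonneg _ (by exact_mod_cast hd.ne'))]
    exact (Int.mod_modEq _ _).mul_right _
  calc ((∑ j ∈ s, (i * c j % d).toNat * b j : ℕ) : ℤ)
      ≡ ∑ j ∈ s, i * c j * b j [ZMOD d] := by push_cast; exact Int.ModEq.sum hmod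
    _ = i * ∑ j ∈ s, (b j : ℤ) * c j := by
      rw [mul_sum]
      exact sum_congr rfl fun j _ => by ring
    _ = i := by rw [← hc, mul_one]

theorem exists_eq_add_mul_of_mod_eq {d m n : ℕ} (hmn : m ≤ n) (hmod : m % d = n % d) :
    ∃ q, n = m + q * d := by
  obtain ⟨q, hq⟩ := (Nat.modEq_iff_dvd' hmn).1 hmod
  exact ⟨q, by rw [mul_comm] at hq; omega⟩

theorem mod_eq_sub_mod_of_dvd_add {d m n : ℕ} (hd : 0 < d) (hdvd : d ∣ m + n) :
    n % d = (d - m % d) % d := by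
  refine Nat.ModEq.add_right_cancel' (m % d) ?_
  rw [Nat.sub_add_cancel (Nat.mod_lt m hd).le]
  calc n + m % d ≡ n + m [MOD d] := (Nat.mod_modEq m d).add_left n
    _ ≡ 0 [MOD d] := Nat.modEq_zero_iff_dvd.2 (by rwa [add_comm])
    _ ≡ d [MOD d] := (Nat.modEq_zero_iff_dvd.2 dvd_rfl).symm

theorem dvd_add_of_mod_eq {d i m n : ℕ} (hi : i ≤ d) (hm : m % d = i % d)
    (hn : n % d = (d - i) % d) : d ∣ m + n := by
  have h : m + n ≡ i + (d - i) [MOD d] := Nat.ModEq.add hm hn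
  rw [Nat.add_sub_cancel' hi] at h
  exact Nat.dvd_of_mod_eq_zero (by rw [h, Nat.mod_self])

theorem sum_range_succ_eq_add_sum_Icc {M : Type*} [AddCommMonoid M] (f : ℕ → M) (k : ℕ) :
    ∑ i ∈ range (k + 1), f i = f 0 + ∑ i ∈ Icc 1 k, f i := by
  rw [range_eq_Ico, sum_eq_sum_Ico_succ_bot (Nat.succ_pos k)]
  rfl

theorem le_floor_sub_two {d a₁ b x y X Y N D : ℕ} (hd : 0 < d) (ha₁ : a₁ ≤ d) (hb : b ≤ d)
    (hxX : x ≤ X) (hyY : y ≤ Y) (hsum : N + 2 + D ≤ x + y)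
    (hweighted : a₁ * x + (d - b) * y ≤ d * D) :
    (N : ℤ) ≤ ⌊(1 - (a₁ : ℚ) / d) * X + ((b : ℚ) / d) * Y⌋ - 2 := by
  have hdq : (0 : ℚ) < d := by exact_mod_cast hd
  have hweighted' : (a₁ : ℚ) * x + (d - b) * y ≤ d * D := by
    rw [← Nat.cast_sub hb]; exact_mod_cast hweighted
  have hcoeff₁ : (0 : ℚ) ≤ 1 - a₁ / d := by
    rw [sub_nonneg, div_le_one hdq]; exact_mod_cast ha₁
  have hcoeff₂ : (0 : ℚ) ≤ b / d := by positivity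
  have hxy : (N : ℚ) + 2 ≤ (1 - a₁ / d) * x + (b / d) * y := by
    have hsum' : (N : ℚ) + 2 + D ≤ x + y := by exact_mod_cast hsum
    have : (1 - (a₁ : ℚ) / d) * x + (b / d) * y = x + y - (a₁ * x + (d - b) * y) / d := by
      field_simp; ring
    have hfrac : ((a₁ : ℚ) * x + (d - b) * y) / d ≤ D := by
      rw [div_le_iff₀ hdq]; linarith
    rw [this]; linarith
  rw [le_sub_iff_add_le, Int.le_floor]
  push_cast
  calc (N : ℚ) + 2 ≤ (1 - a₁ / d) * x + (b / d) * y := hxy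
    _ ≤ (1 - a₁ / d) * X + (b / d) * Y := by gcongr

variable {k : ℕ} {a : ℕ → ℕ}

theorem delta1_le {n : ℕ} (x : ℕ → ℕ) (hx : n = ∑ i ∈ Icc 1 k, x i * a i) :
    delta1 k a n ≤ ∑ i ∈ Icc 1 k, x i :=
  Nat.sInf_le ⟨x, hx, rfl⟩

theorem delta2_le {n : ℕ} (x : ℕ → ℕ) (hx : n = ∑ i ∈ range k, x i * (a k - a i)) :
    delta2 k a n ≤ ∑ i ∈ range k, x i :=
  Nat.sInf_le ⟨x, hx, rfl⟩

theorem exists_sum_eq_delta1 {n : ℕ} (hn : n ∈ S1 k a) :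
    ∃ x : ℕ → ℕ, n = ∑ i ∈ Icc 1 k, x i * a i ∧ ∑ i ∈ Icc 1 k, x i = delta1 k a n := by
  obtain ⟨x, hx⟩ := hn
  obtain ⟨y, hy, hm⟩ := Nat.sInf_mem (s := {m | ∃ x : ℕ → ℕ,
    n = ∑ i ∈ Icc 1 k, x i * a i ∧ m = ∑ i ∈ Icc 1 k, x i}) ⟨_, x, hx, rfl⟩
  exact ⟨y, hy, hm.symm⟩

theorem exists_sum_eq_delta2 {n : ℕ} (hn : n ∈ S2 k a) :
    ∃ x : ℕ → ℕ, n = ∑ i ∈ range k, x i * (a k - a i) ∧ ∑ i ∈ range k, x i = delta2 k a n := by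
  obtain ⟨x, hx⟩ := hn
  obtain ⟨y, hy, hm⟩ := Nat.sInf_mem (s := {m | ∃ x : ℕ → ℕ,
    n = ∑ i ∈ range k, x i * (a k - a i) ∧ m = ∑ i ∈ range k, x i}) ⟨_, x, hx, rfl⟩
  exact ⟨y, hy, hm.symm⟩

theorem apply_eq_sum_single {j : ℕ} (hj : j ∈ Icc 1 k) :
    a j = ∑ i ∈ Icc 1 k, (Pi.single j 1 : ℕ → ℕ) i * a i := by
  simp [Pi.single_apply, hj]

theorem delta1_add_mul_le (hk : 0 < k) {n : ℕ} (hn : n ∈ S1 k a) (q : ℕ) :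
    delta1 k a (n + q * a k) ≤ delta1 k a n + q := by
  obtain ⟨x, hx, hsum⟩ := exists_sum_eq_delta1 hn
  have hkmem : k ∈ Icc 1 k := mem_Icc.2 ⟨hk, le_rfl⟩
  calc delta1 k a (n + q * a k) ≤ ∑ i ∈ Icc 1 k, (x + Pi.single k q : ℕ → ℕ) i :=
        delta1_le _ (by simp [add_mul, sum_add_distrib, Pi.single_apply, hkmem, hx])
    _ = delta1 k a n + q := by simp [sum_add_distrib, hsum, hkmem]

theorem delta2_add_mul_le (ha0 : a 0 = 0) (hk : 0 < k) {n : ℕ} (hn : n ∈ S2 k a) (r : ℕ) :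
    delta2 k a (n + r * a k) ≤ delta2 k a n + r := by
  obtain ⟨x, hx, hsum⟩ := exists_sum_eq_delta2 hn
  have h0mem : 0 ∈ range k := mem_range.2 hk
  calc delta2 k a (n + r * a k) ≤ ∑ i ∈ range k, (x + Pi.single 0 r : ℕ → ℕ) i :=
        delta2_le _ (by simp [add_mul, sum_add_distrib, Pi.single_apply, h0mem, hx, ha0])
    _ = delta2 k a n + r := by simp [sum_add_distrib, hsum, h0mem]

theorem mul_delta1_le (ha : MonotoneOn a (Set.Iic k)) {n : ℕ} (hn : n ∈ S1 k a) :
    a 1 * delta1 k a n ≤ n := by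
  obtain ⟨x, hx, hsum⟩ := exists_sum_eq_delta1 hn
  calc a 1 * delta1 k a n = ∑ i ∈ Icc 1 k, x i * a 1 := by rw [← hsum, mul_comm, sum_mul]
    _ ≤ ∑ i ∈ Icc 1 k, x i * a i := sum_le_sum fun i hi => by
        have hi := mem_Icc.1 hi
        exact Nat.mul_le_mul_left _
          (ha (Set.mem_Iic.2 (hi.1.trans hi.2)) (Set.mem_Iic.2 hi.2) hi.1)
    _ = n := hx.symm

theorem mul_delta2_le (ha : MonotoneOn a (Set.Iic k)) {n : ℕ} (hn : n ∈ S2 k a) :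
    (a k - a (k - 1)) * delta2 k a n ≤ n := by
  obtain ⟨x, hx, hsum⟩ := exists_sum_eq_delta2 hn
  calc (a k - a (k - 1)) * delta2 k a n = ∑ i ∈ range k, x i * (a k - a (k - 1)) := by
        rw [← hsum, mul_comm, sum_mul]
    _ ≤ ∑ i ∈ range k, x i * (a k - a i) := sum_le_sum fun i hi => by
        have hi := mem_range.1 hi
        exact Nat.mul_le_mul_left _ (Nat.sub_le_sub_left
          (ha (Set.mem_Iic.2 (by omega)) (Set.mem_Iic.2 (by omega)) (by omega)) _)
    _ = n := hx.symm

theorem mem_S_iff {u : ℕ × ℕ} : u ∈ S k a ↔ ∃ x : ℕ → ℕ,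
    u.1 = ∑ i ∈ range (k + 1), x i * a i ∧ u.2 = ∑ i ∈ range (k + 1), x i * (a k - a i) := by
  simp only [S, e, Set.mem_ofPred_eq, Prod.ext_iff, Prod.fst_sum, Prod.snd_sum, Prod.smul_fst,
    Prod.smul_snd, smul_eq_mul]

theorem sum_mul_add_sum_mul_sub (ha : MonotoneOn a (Set.Iic k)) (x : ℕ → ℕ) :
    ∑ i ∈ range (k + 1), x i * a i + ∑ i ∈ range (k + 1), x i * (a k - a i)
      = (∑ i ∈ range (k + 1), x i) * a k := by
  rw [← sum_add_distrib, sum_mul]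
  refine sum_congr rfl fun i hi => ?_
  have hi : i ≤ k := Nat.lt_succ_iff.1 (mem_range.1 hi)
  rw [← mul_add, Nat.add_sub_cancel' (ha (Set.mem_Iic.2 hi) (Set.mem_Iic.2 le_rfl) hi)]

theorem deg_eq_sum (ha : MonotoneOn a (Set.Iic k)) (hd : 0 < a k) {u : ℕ × ℕ} {x : ℕ → ℕ}
    (h1 : u.1 = ∑ i ∈ range (k + 1), x i * a i)
    (h2 : u.2 = ∑ i ∈ range (k + 1), x i * (a k - a i)) :
    deg k a u = ∑ i ∈ range (k + 1), x i := by
  rw [deg, h1, h2, sum_mul_add_sum_mul_sub ha, Nat.mul_div_cancel _ hd]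

theorem mem_S_of_fst_eq (ha : MonotoneOn a (Set.Iic k)) {u : ℕ × ℕ} (hdvd : a k ∣ u.1 + u.2)
    (x : ℕ → ℕ) (h1 : u.1 = ∑ i ∈ range (k + 1), x i * a i)
    (hx : ∑ i ∈ range (k + 1), x i = deg k a u) : u ∈ S k a := by
  have h := sum_mul_add_sum_mul_sub ha x
  rw [hx, deg, Nat.div_mul_cancel hdvd] at h
  exact mem_S_iff.2 ⟨x, h1, by omega⟩

theorem mem_S_of_snd_eq (ha : MonotoneOn a (Set.Iic k)) {u : ℕ × ℕ} (hdvd : a k ∣ u.1 + u.2)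
    (x : ℕ → ℕ) (h2 : u.2 = ∑ i ∈ range (k + 1), x i * (a k - a i))
    (hx : ∑ i ∈ range (k + 1), x i = deg k a u) : u ∈ S k a := by
  have h := sum_mul_add_sum_mul_sub ha x
  rw [hx, deg, Nat.div_mul_cancel hdvd] at h
  exact mem_S_iff.2 ⟨x, by omega, h2⟩

theorem mem_S_iff_delta1 (ha0 : a 0 = 0) (ha : MonotoneOn a (Set.Iic k)) (hd : 0 < a k)
    {u : ℕ × ℕ} :
    u ∈ S k a ↔ a k ∣ u.1 + u.2 ∧ u.1 ∈ S1 k a ∧ delta1 k a u.1 ≤ deg k a u := by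
  constructor
  · intro hu
    obtain ⟨x, h1, h2⟩ := mem_S_iff.1 hu
    have hdeg := deg_eq_sum ha hd h1 h2
    refine ⟨⟨deg k a u, ?_⟩, ?_⟩
    · rw [h1, h2, sum_mul_add_sum_mul_sub ha, hdeg, mul_comm]
    rw [sum_range_succ_eq_add_sum_Icc, ha0, mul_zero, zero_add] at h1
    refine ⟨⟨x, h1⟩, (delta1_le x h1).trans ?_⟩
    rw [hdeg, sum_range_succ_eq_add_sum_Icc]
    exact Nat.le_add_left _ _
  · rintro ⟨hdvd, hu1, hle⟩
    obtain ⟨x, hx, hsum⟩ := exists_sum_eq_delta1 hu1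
    have hIcc : ∀ i ∈ Icc 1 k, Function.update x 0 (deg k a u - delta1 k a u.1) i = x i :=
      fun i hi => Function.update_of_ne (by have := (mem_Icc.1 hi).1; omega) _ _
    refine mem_S_of_fst_eq ha hdvd (Function.update x 0 (deg k a u - delta1 k a u.1)) ?_ ?_
    · rw [sum_range_succ_eq_add_sum_Icc, ha0, mul_zero, zero_add]
      exact hx.trans (sum_congr rfl fun i hi => by rw [hIcc i hi])
    · rw [sum_range_succ_eq_add_sum_Icc, Function.update_self, sum_congr rfl hIcc, hsum]
      omega

theorem mem_S_iff_delta2 (ha : MonotoneOn a (Set.Iic k)) (hd : 0 < a k) {u : ℕ × ℕ} :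
    u ∈ S k a ↔ a k ∣ u.1 + u.2 ∧ u.2 ∈ S2 k a ∧ delta2 k a u.2 ≤ deg k a u := by
  constructor
  · intro hu
    obtain ⟨x, h1, h2⟩ := mem_S_iff.1 hu
    have hdeg := deg_eq_sum ha hd h1 h2
    refine ⟨⟨deg k a u, ?_⟩, ?_⟩
    · rw [h1, h2, sum_mul_add_sum_mul_sub ha, hdeg, mul_comm]
    rw [sum_range_succ, Nat.sub_self, mul_zero, add_zero] at h2
    refine ⟨⟨x, h2⟩, (delta2_le x h2).trans ?_⟩
    rw [hdeg, sum_range_succ]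
    exact Nat.le_add_right _ _
  · rintro ⟨hdvd, hu2, hle⟩
    obtain ⟨x, hx, hsum⟩ := exists_sum_eq_delta2 hu2
    have hrange : ∀ i ∈ range k, Function.update x k (deg k a u - delta2 k a u.2) i = x i :=
      fun i hi => Function.update_of_ne (mem_range.1 hi).ne _ _
    refine mem_S_of_snd_eq ha hdvd (Function.update x k (deg k a u - delta2 k a u.2)) ?_ ?_
    · rw [sum_range_succ, Nat.sub_self, mul_zero, add_zero]
      exact hx.trans (sum_congr rfl fun i hi => by rw [hrange i hi])
    · rw [sum_range_succ, Function.update_self, sum_congr rfl hrange, hsum]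
      omega

theorem fst_add_snd_add_smul_e {h : ℕ} (hh : h ≤ a k) (u : ℕ × ℕ) (p : ℕ) :
    (u + p • e k a h).1 + (u + p • e k a h).2 = u.1 + u.2 + p * a k := by
  simp only [e, Prod.fst_add, Prod.snd_add, Prod.smul_fst, Prod.smul_snd, smul_eq_mul]
  rw [← Nat.add_sub_cancel' hh]
  simp only [Nat.add_sub_cancel_left]
  ring

theorem mem_S'_iff (ha0 : a 0 = 0) (ha : MonotoneOn a (Set.Iic k)) (hd : 0 < a k)
    {u : ℕ × ℕ} : u ∈ S' k a ↔ u.1 ∈ S1 k a ∧ u.2 ∈ S2 k a ∧ a k ∣ u.1 + u.2 := by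
  have h0 := fst_add_snd_add_smul_e (a := a) (Nat.zero_le (a k)) u
  have hd' := fst_add_snd_add_smul_e (k := k) (a := a) le_rfl u
  constructor
  · rintro ⟨p, hp0, hpd⟩
    obtain ⟨hdvd, hu1, -⟩ := (mem_S_iff_delta1 ha0 ha hd).1 hp0
    obtain ⟨-, hu2, -⟩ := (mem_S_iff_delta2 ha hd).1 hpd
    rw [h0, Nat.dvd_add_left (dvd_mul_left _ _)] at hdvd
    simp only [e, Prod.fst_add, Prod.snd_add, Prod.smul_fst, Prod.smul_snd, smul_eq_mul,
      mul_zero, add_zero, Nat.sub_self] at hu1 hu2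
    exact ⟨hu1, hu2, hdvd⟩
  · rintro ⟨hu1, hu2, hdvd⟩
    have hdeg : ∀ h ≤ a k, ∀ p, deg k a (u + p • e k a h) = deg k a u + p := fun h hh p => by
      rw [deg, fst_add_snd_add_smul_e hh, Nat.add_mul_div_right _ _ hd, deg]
    refine ⟨delta1 k a u.1 + delta2 k a u.2, ?_, ?_⟩
    · refine (mem_S_iff_delta1 ha0 ha hd).2 ⟨by rw [h0]; exact dvd_add hdvd (dvd_mul_left _ _), ?_⟩
      rw [hdeg 0 (Nat.zero_le _)]
      simp only [e, Prod.fst_add, Prod.smul_fst, smul_eq_mul, mul_zero,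
        add_zero]
      exact ⟨hu1, by omega⟩
    · refine (mem_S_iff_delta2 ha hd).2 ⟨by rw [hd']; exact dvd_add hdvd (dvd_mul_left _ _), ?_⟩
      rw [hdeg (a k) le_rfl]
      simp only [e, Prod.snd_add, Prod.smul_snd, smul_eq_mul, Nat.sub_self,
        mul_zero, add_zero]
      exact ⟨hu2, by omega⟩

theorem omega1_spec {i : ℕ} (h : ∃ n ∈ S1 k a, n % a k = i % a k) :
    omega1 k a i ∈ S1 k a ∧ omega1 k a i % a k = i % a k :=
  Nat.sInf_mem h

theorem omega2_spec {i : ℕ} (h : ∃ n ∈ S2 k a, n % a k = i % a k) :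
    omega2 k a i ∈ S2 k a ∧ omega2 k a i % a k = i % a k :=
  Nat.sInf_mem h

theorem omega1_le {i n : ℕ} (hn : n ∈ S1 k a) (hmod : n % a k = i % a k) : omega1 k a i ≤ n :=
  Nat.sInf_le ⟨hn, hmod⟩

theorem omega2_le {i n : ℕ} (hn : n ∈ S2 k a) (hmod : n % a k = i % a k) : omega2 k a i ≤ n :=
  Nat.sInf_le ⟨hn, hmod⟩

theorem exists_eq_omega1_add_mul {i n : ℕ} (hn : n ∈ S1 k a) (hmod : n % a k = i % a k) :
    ∃ q, n = omega1 k a i + q * a k :=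
  exists_eq_add_mul_of_mod_eq (omega1_le hn hmod) ((omega1_spec ⟨n, hn, hmod⟩).2.trans hmod.symm)

theorem exists_eq_omega2_add_mul {i n : ℕ} (hn : n ∈ S2 k a) (hmod : n % a k = i % a k) :
    ∃ r, n = omega2 k a i + r * a k :=
  exists_eq_add_mul_of_mod_eq (omega2_le hn hmod) ((omega2_spec ⟨n, hn, hmod⟩).2.trans hmod.symm)

theorem gcd_sub_eq_one (ha0 : a 0 = 0) (ha : MonotoneOn a (Set.Iic k)) (hk : 0 < k)
    (hgcd : (Icc 1 k).gcd a = 1) : (range k).gcd (fun j => a k - a j) = 1 := by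
  set g := (range k).gcd (fun j => a k - a j)
  have hgd : g ∣ a k := by simpa [ha0] using gcd_dvd (f := fun j => a k - a j) (mem_range.2 hk)
  have hga : ∀ j ∈ Icc 1 k, g ∣ a j := by
    intro j hj
    obtain ⟨hj1, hjk⟩ := mem_Icc.1 hj
    rcases hjk.lt_or_eq with hjk | rfl
    · have hle : a j ≤ a k := ha (Set.mem_Iic.2 hjk.le) (Set.mem_Iic.2 le_rfl) hjk.le
      rw [← Nat.sub_sub_self hle]
      exact Nat.dvd_sub hgd (gcd_dvd (mem_range.2 hjk))
    · exact hgd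
  exact Nat.dvd_one.1 (hgcd ▸ dvd_gcd hga)

theorem exists_mem_S1_mod_eq (hgcd : (Icc 1 k).gcd a = 1) (hd : 0 < a k) (i : ℕ) :
    ∃ n ∈ S1 k a, n % a k = i % a k :=
  let ⟨x, hx⟩ := exists_sum_mul_mod_eq hgcd hd i
  ⟨_, ⟨x, rfl⟩, hx⟩

theorem exists_mem_S2_mod_eq (ha0 : a 0 = 0) (ha : MonotoneOn a (Set.Iic k)) (hk : 0 < k)
    (hgcd : (Icc 1 k).gcd a = 1) (hd : 0 < a k) (i : ℕ) : ∃ n ∈ S2 k a, n % a k = i % a k :=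
  let ⟨x, hx⟩ := exists_sum_mul_mod_eq (gcd_sub_eq_one ha0 ha hk hgcd) hd i
  ⟨_, ⟨x, rfl⟩, hx⟩

theorem mem_II_of_deg_lt_delta1 (ha : StrictMonoOn a (Set.Iic k)) {i : ℕ} (hi : i < a k)
    (hmod : (w k a i).1 % a k = i) (hdvd : a k ∣ (w k a i).1 + (w k a i).2)
    (hlt : deg k a (w k a i) < delta1 k a (w k a i).1) : i ∈ II k a := by
  refine ⟨Nat.one_le_iff_ne_zero.2 ?_, by omega, ?_, hlt⟩
  · rintro rfl
    have hw : (w k a 0).1 = 0 := Nat.le_zero.1 (omega1_le ⟨0, by simp⟩ rfl)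
    have hδ : delta1 k a 0 = 0 := Nat.le_zero.1 ((delta1_le 0 (by simp)).trans (by simp))
    rw [hw, hδ] at hlt
    exact Nat.not_lt_zero _ hlt
  · rintro j hj1 hjk rfl
    have hj : j ∈ Icc 1 k := mem_Icc.2 ⟨hj1, by omega⟩
    have hpos : 0 < a j := (Nat.zero_le _).trans_lt
      (ha (Set.mem_Iic.2 (Nat.zero_le _)) (Set.mem_Iic.2 (by omega)) (by omega))
    have hw : (w k a (a j)).1 = a j :=
      le_antisymm (omega1_le ⟨_, apply_eq_sum_single hj⟩ rfl) (hmod.symm.trans_le (Nat.mod_le _ _))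
    have hδ : delta1 k a (a j) ≤ 1 := by
      simpa [Pi.single_apply, hj] using delta1_le _ (apply_eq_sum_single hj)
    have hdeg : 1 ≤ deg k a (w k a (a j)) :=
      Nat.div_pos (Nat.le_of_dvd (by omega) hdvd) (by omega)
    rw [hw] at hlt
    omega

theorem exists_mem_II_of_mem_S'_diff_S (ha0 : a 0 = 0) (ha : StrictMonoOn a (Set.Iic k))
    (hk : 0 < k) {u : ℕ × ℕ} (hu : u ∈ S' k a \ S k a) :
    ∃ i ∈ II k a, deg k a u + 2 + deg k a (w k a i)
      ≤ delta1 k a (w k a i).1 + delta2 k a (w k a i).2 := by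
  have hd : 0 < a k := (Nat.zero_le _).trans_lt
    (ha (Set.mem_Iic.2 (Nat.zero_le _)) (Set.mem_Iic.2 le_rfl) hk)
  obtain ⟨h1, h2, hdvd⟩ := (mem_S'_iff ha0 ha.monotoneOn hd).1 hu.1
  have hlt1 : deg k a u < delta1 k a u.1 := lt_of_not_ge fun h =>
    hu.2 ((mem_S_iff_delta1 ha0 ha.monotoneOn hd).2 ⟨hdvd, h1, h⟩)
  have hlt2 : deg k a u < delta2 k a u.2 := lt_of_not_ge fun h =>
    hu.2 ((mem_S_iff_delta2 ha.monotoneOn hd).2 ⟨hdvd, h2, h⟩)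
  set i := u.1 % a k
  have hi : i < a k := Nat.mod_lt _ hd
  have hmod1 : u.1 % a k = i % a k := (Nat.mod_mod _ _).symm
  have hmod2 : u.2 % a k = (a k - i) % a k := mod_eq_sub_mod_of_dvd_add hd hdvd
  obtain ⟨q, hq⟩ := exists_eq_omega1_add_mul h1 hmod1
  obtain ⟨r, hr⟩ := exists_eq_omega2_add_mul h2 hmod2
  obtain ⟨hw1, hw1mod⟩ := omega1_spec ⟨_, h1, hmod1⟩
  obtain ⟨hw2, hw2mod⟩ := omega2_spec ⟨_, h2, hmod2⟩
  have hdvdw : a k ∣ (w k a i).1 + (w k a i).2 := dvd_add_of_mod_eq hi.le hw1mod hw2mod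
  have hdeg : deg k a u = deg k a (w k a i) + q + r := by
    have : u.1 + u.2 = (w k a i).1 + (w k a i).2 + (q + r) * a k := by
      rw [hq, hr]; simp only [w]; ring
    rw [deg, this, Nat.add_mul_div_right _ _ hd, deg, add_assoc]
  have hδ1 : delta1 k a u.1 ≤ delta1 k a (w k a i).1 + q := hq ▸ delta1_add_mul_le hk hw1 q
  have hδ2 : delta2 k a u.2 ≤ delta2 k a (w k a i).2 + r := hr ▸ delta2_add_mul_le ha0 hk hw2 r
  refine ⟨i, mem_II_of_deg_lt_delta1 ha hi ?_ hdvdw (by omega), by omega⟩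
  rw [show (w k a i).1 = omega1 k a i from rfl, hw1mod, Nat.mod_eq_of_lt hi]

theorem w_mem_S'_diff_S (ha0 : a 0 = 0) (ha : MonotoneOn a (Set.Iic k)) (hk : 0 < k)
    (hgcd : (Icc 1 k).gcd a = 1) (hd : 0 < a k) {i : ℕ} (hi : i ∈ II k a) :
    w k a i ∈ S' k a \ S k a := by
  obtain ⟨hw1, hw1mod⟩ := omega1_spec (exists_mem_S1_mod_eq hgcd hd i)
  obtain ⟨hw2, hw2mod⟩ := omega2_spec (exists_mem_S2_mod_eq ha0 ha hk hgcd hd (a k - i))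
  refine ⟨(mem_S'_iff ha0 ha hd).2 ⟨hw1, hw2, dvd_add_of_mod_eq (by have := hi.2.1; omega) hw1mod hw2mod⟩,
    fun hS => ?_⟩
  exact absurd ((mem_S_iff_delta1 ha0 ha hd).1 hS).2.2 (not_le.2 hi.2.2.2)

theorem mul_delta1_add_mul_delta2_le (ha0 : a 0 = 0) (ha : MonotoneOn a (Set.Iic k))
    (hd : 0 < a k) {u : ℕ × ℕ} (hu : u ∈ S' k a) :
    a 1 * delta1 k a u.1 + (a k - a (k - 1)) * delta2 k a u.2 ≤ a k * deg k a u := by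
  obtain ⟨h1, h2, hdvd⟩ := (mem_S'_iff ha0 ha hd).1 hu
  rw [deg, Nat.mul_div_cancel' hdvd]
  exact Nat.add_le_add (mul_delta1_le ha h1) (mul_delta2_le ha h2)

theorem bddAbove_II (f : ℕ → ℕ) : BddAbove {m | ∃ i ∈ II k a, m = f i} :=
  ((Set.finite_Iio (a k)).image f).bddAbove.mono <| by
    rintro _ ⟨i, ⟨hi1, hid, -⟩, rfl⟩
    exact ⟨i, Set.mem_Iio.2 (by omega), rfl⟩

theorem statement_12 (k : ℕ) (a : ℕ → ℕ) (hk : 3 ≤ k) (ha0 : a 0 = 0)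
    (hmono : ∀ i, i < k → a i < a (i+1)) (hgcd : (Finset.Icc 1 k).gcd a = 1)
    (hne : (II k a).Nonempty) :
    (sSup {m | ∃ u ∈ S' k a \ S k a, m = deg k a u} ≤
      sSup {m | ∃ i ∈ II k a,
        m = delta1 k a (w k a i).1 + delta2 k a (w k a i).2 - deg k a (w k a i)} - 2) ∧
    ((sSup {m | ∃ u ∈ S' k a \ S k a, m = deg k a u} : ℤ) ≤
      ⌊(1 - (a 1 : ℚ) / (a k : ℚ)) *
          ((sSup {m | ∃ i ∈ II k a, m = delta1 k a (w k a i).1} : ℕ) : ℚ) +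
        ((a (k-1) : ℚ) / (a k : ℚ)) *
          ((sSup {m | ∃ i ∈ II k a, m = delta2 k a (w k a i).2} : ℕ) : ℚ)⌋ - 2) := by
  have ha : StrictMonoOn a (Set.Iic k) := strictMonoOn_Iic_of_lt_succ hmono
  have hk0 : 0 < k := by omega
  have hd : 0 < a k := (Nat.zero_le _).trans_lt
    (ha (Set.mem_Iic.2 (Nat.zero_le _)) (Set.mem_Iic.2 le_rfl) hk0)
  have hbound : ∀ u ∈ S' k a \ S k a, ∃ i ∈ II k a,
      deg k a u + 2 + deg k a (w k a i) ≤ delta1 k a (w k a i).1 + delta2 k a (w k a i).2 ∧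
      a 1 * delta1 k a (w k a i).1 + (a k - a (k - 1)) * delta2 k a (w k a i).2
        ≤ a k * deg k a (w k a i) := fun u hu =>
    let ⟨i, hi, hsum⟩ := exists_mem_II_of_mem_S'_diff_S ha0 ha hk0 hu
    ⟨i, hi, hsum, mul_delta1_add_mul_delta2_le ha0 ha.monotoneOn hd
      (w_mem_S'_diff_S ha0 ha.monotoneOn hk0 hgcd hd hi).1⟩
  obtain ⟨i₀, hi₀⟩ := hne
  refine ⟨csSup_le' ?_, csSup_le ⟨_, w k a i₀, w_mem_S'_diff_S ha0 ha.monotoneOn hk0 hgcd hd hi₀,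
    rfl⟩ ?_⟩
  · rintro _ ⟨u, hu, rfl⟩
    obtain ⟨i, hi, hsum, -⟩ := hbound u hu
    have : delta1 k a (w k a i).1 + delta2 k a (w k a i).2 - deg k a (w k a i) ≤ sSup {m |
        ∃ i ∈ II k a, m = delta1 k a (w k a i).1 + delta2 k a (w k a i).2 - deg k a (w k a i)} :=
      le_csSup (bddAbove_II _) ⟨i, hi, rfl⟩
    omega
  · rintro _ ⟨u, hu, rfl⟩
    obtain ⟨i, hi, hsum, hweighted⟩ := hbound u hu
    exact le_floor_sub_two hd (ha.monotoneOn (Set.mem_Iic.2 (by omega)) (Set.mem_Iic.2 le_rfl)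
      (by omega)) (ha.monotoneOn (Set.mem_Iic.2 (by omega)) (Set.mem_Iic.2 le_rfl) (by omega))
      (le_csSup (bddAbove_II _) ⟨i, hi, rfl⟩) (le_csSup (bddAbove_II _) ⟨i, hi, rfl⟩) hsum hweighted

end ProjMonomialCurve
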